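/- Fix ξ ∈ 𝔹_T^N. For every transient state x ∈ 𝔹_T^N, the rare-mutation conditional probability of x equals the fraction of sojourn time spent in x among all transient states: lim_{u→0} P_{π_⟲(ξ)}[X = x | X ∈ 𝔹_T^N] = t_ξ(x) / t_ξ(𝔹_T^N), where t_ξ(𝔹_T^N) = Σ_{y ∈ 𝔹_T^N} t_ξ(y). -/

import Mathlib

/-!
Let `Q` be the block of the transition matrix `P` on the transient states. Since the absorbing
states are closed, `Q ^ t` is the transient block of `P ^ t`, so `t_ξ(y) = Σ_t Q^t(ξ, y)`. The
Fixation Axiom yields a path of positive probability from every state to an absorbing one, so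
every row of some power `Q ^ m` sums to less than `1`, and hence `Q ^ t → 0`.

On the transient states, stationarity of `π_⟲(ξ)` reads `π = c δ_ξ + π Q` with
`c = u π({𝐀, 𝐁})`; iterating and letting `Q ^ t → 0` gives `π = c Σ_t δ_ξ Q^t`, i.e.
`π(y) = c t_ξ(y)`, and `c ≠ 0` because `π` has total mass `1`. So the conditional distribution
is `t_ξ / t_ξ(𝔹_T^N)` for every `u ∈ (0, 1]`, not only in the limit.
-/

open Finset Filter Asymptotics Topology

namespace Evo

/-- A population state: each of the `N` individuals has type `A` (`true`) or `B` (`false`). -/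
abbrev St (N : ℕ) := Fin N → Bool

/-- A replacement event `(R, α)`: the set `R` of replaced individuals together with a
parentage map (only the values on `R` are relevant). -/
abbrev Event (N : ℕ) := Finset (Fin N) × (Fin N → Fin N)

/-- The extended parentage map `α̃`, equal to `α` on `R` and the identity off `R`. -/
def extMap {N : ℕ} (e : Event N) (i : Fin N) : Fin N := if i ∈ e.1 then e.2 i else i

/-- The state update induced by a replacement event: `x ↦ x_α̃`. -/
def upd {N : ℕ} (e : Event N) (x : St N) : St N := fun i => x (extMap e i)

/-- Boolean values as reals. -/
def bv (b : Bool) : ℝ := if b then 1 else 0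

/-- The all-`A` state. -/
def stA (N : ℕ) : St N := fun _ => true

/-- The all-`B` state. -/
def stB (N : ℕ) : St N := fun _ => false

/-- Transient (non-monoallelic) states, i.e. members of `𝔹_T^N`. -/
def Transient {N : ℕ} (x : St N) : Prop := x ≠ stA N ∧ x ≠ stB N

/-- A replacement rule: for each state, a probability distribution over replacement events. -/
def IsRule {N : ℕ} (p : St N → Event N → ℝ) : Prop :=
  (∀ x e, 0 ≤ p x e) ∧ ∀ x, ∑ e : Event N, p x e = 1

/-- A state-independent distribution over replacement events (a neutral replacement rule). -/
def IsDist {N : ℕ} (p0 : Event N → ℝ) : Prop :=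
  (∀ e, 0 ≤ p0 e) ∧ ∑ e : Event N, p0 e = 1

/-- Transition matrix of the Markov chain induced by a replacement rule. -/
def tmat {N : ℕ} (p : St N → Event N → ℝ) : Matrix (St N) (St N) ℝ :=
  Matrix.of fun x y => ∑ e : Event N, if upd e x = y then p x e else 0

/-- The Fixation Axiom. -/
def FixAxiom {N : ℕ} (p : St N → Event N → ℝ) : Prop :=
  ∃ (i : Fin N) (m : ℕ) (ev : Fin m → Event N), 1 ≤ m ∧
    (∀ k x, 0 < p x (ev k)) ∧ (∃ k, i ∈ (ev k).1) ∧
    (∀ j, (List.ofFn fun k => extMap (ev k)).foldr (· ∘ ·) id j = i)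

/-- The sojourn time `t_ξ(x)`: expected number of visits to `x` prior to absorption,
starting from `ξ` (expressed as `Σ_t (P^t)(ξ, x)`). -/
noncomputable def sojourn {N : ℕ} (p : St N → Event N → ℝ) (ξ x : St N) : ℝ :=
  ∑' t : ℕ, (tmat p ^ t) ξ x

/-- The amended transition matrix `P^⟲(ξ)`. -/
def amend {N : ℕ} (p : St N → Event N → ℝ) (ξ : St N) (u : ℝ) : Matrix (St N) (St N) ℝ :=
  Matrix.of fun x y =>
    if x = stA N ∨ x = stB N then (if y = ξ then u else (1 - u) * tmat p x y)
    else tmat p x y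

/-- `q` is a stationary distribution for the transition matrix `P`. -/
def IsStat {N : ℕ} (P : Matrix (St N) (St N) ℝ) (q : St N → ℝ) : Prop :=
  (∀ x, 0 ≤ q x) ∧ (∑ x : St N, q x = 1) ∧ ∀ y, ∑ x : St N, q x * P x y = q y

end Evo

namespace Matrix

variable {ι : Type*} [Fintype ι]

theorem submatrix_val_pow_of_compl_closed [DecidableEq ι] {R : Type*} [Semiring R]
    {P : Matrix ι ι R} {s : ι → Prop} [DecidablePred s] (hP : ∀ i j, ¬ s i → s j → P i j = 0)
    (t : ℕ) :
    (P.submatrix Subtype.val Subtype.val : Matrix {i // s i} {i // s i} R) ^ t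
      = (P ^ t).submatrix Subtype.val Subtype.val := by
  induction t with
  | zero => exact (submatrix_one _ Subtype.val_injective).symm
  | succ t ih =>
    ext a b
    rw [pow_succ, pow_succ, ih]
    simp only [mul_apply, submatrix_apply]
    refine Fintype.sum_of_injective Subtype.val Subtype.val_injective _ _ (fun z hz => ?_)
      fun _ => rfl
    rw [hP z b (fun h => hz ⟨⟨z, h⟩, rfl⟩) b.2, mul_zero]

theorem sum_mul_apply_le {κ μ R : Type*} [Fintype μ] [Semiring R] [PartialOrder R]
    [IsOrderedRing R] {A : Matrix κ ι R} {B : Matrix ι μ R} {c : R} (hA : ∀ i j, 0 ≤ A i j)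
    (hB : ∀ k, ∑ j, B k j ≤ c) (i : κ) :
    ∑ j, (A * B) i j ≤ (∑ k, A i k) * c := by
  simp only [mul_apply]
  rw [Finset.sum_comm, Finset.sum_mul]
  gcongr with k
  rw [← Finset.mul_sum]
  exact mul_le_mul_of_nonneg_left (hB k) (hA i k)

theorem sum_pow_apply_le_one [DecidableEq ι] {R : Type*} [Semiring R] [PartialOrder R]
    [IsOrderedRing R] {Q : Matrix ι ι R} (hQ : ∀ i j, 0 ≤ Q i j) (hQ1 : ∀ i, ∑ j, Q i j ≤ 1)
    (t : ℕ) (i : ι) :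
    ∑ j, (Q ^ t) i j ≤ 1 := by
  induction t generalizing i with
  | zero => simp [one_apply]
  | succ t ih =>
    rw [pow_succ]
    exact (sum_mul_apply_le (pow_apply_nonneg hQ t) hQ1 i).trans (by simpa using ih i)

theorem tendsto_pow_atTop_nhds_zero_of_sum_pow_apply_lt_one [DecidableEq ι] {Q : Matrix ι ι ℝ}
    (hQ : ∀ i j, 0 ≤ Q i j) (hQ1 : ∀ i, ∑ j, Q i j ≤ 1) {m : ℕ}
    (hQm : ∀ i, ∑ j, (Q ^ m) i j < 1) :
    Tendsto (fun t => Q ^ t) atTop (𝓝 0) := by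
  rcases isEmpty_or_nonempty ι with hι | hι
  · simpa only [Subsingleton.elim _ (0 : Matrix ι ι ℝ)] using tendsto_const_nhds
  obtain ⟨i₀, -, hi₀⟩ :=
    Finset.exists_max_image univ (fun i => ∑ j, (Q ^ m) i j) univ_nonempty
  set θ := ∑ j, (Q ^ m) i₀ j
  have hθ0 : 0 ≤ θ := sum_nonneg fun j _ => pow_apply_nonneg hQ m i₀ j
  have hθ1 : θ < 1 := hQm i₀
  have hm : m ≠ 0 := by
    rintro rfl
    simp [θ, one_apply] at hθ1
  have hdecay : ∀ k i, ∑ j, (Q ^ (m * k)) i j ≤ θ ^ k := by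
    intro k
    induction k with
    | zero => intro i; simp [one_apply]
    | succ k ih =>
      intro i
      rw [mul_add_one, pow_add, pow_succ]
      exact (sum_mul_apply_le (pow_apply_nonneg hQ _) (fun k => hi₀ k (mem_univ k)) i).trans
        (mul_le_mul_of_nonneg_right (ih i) hθ0)
  have hentry : ∀ t i j, (Q ^ t) i j ≤ θ ^ (t / m) := fun t i j =>
    calc (Q ^ t) i j ≤ ∑ j', (Q ^ t) i j' :=
          single_le_sum (fun j' _ => pow_apply_nonneg hQ t i j') (mem_univ j)
      _ = ∑ j', (Q ^ (m * (t / m)) * Q ^ (t % m)) i j' := by rw [← pow_add, Nat.div_add_mod]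
      _ ≤ (∑ j', (Q ^ (m * (t / m))) i j') * 1 :=
          sum_mul_apply_le (pow_apply_nonneg hQ _) (sum_pow_apply_le_one hQ hQ1 _) i
      _ ≤ θ ^ (t / m) := by simpa using hdecay _ i
  have hlim : Tendsto (fun t => θ ^ (t / m)) atTop (𝓝 0) :=
    (tendsto_pow_atTop_nhds_zero_of_lt_one hθ0 hθ1).comp (Nat.tendsto_div_const_atTop hm)
  refine tendsto_pi_nhds.2 fun i => tendsto_pi_nhds.2 fun j => ?_
  exact squeeze_zero (fun t => pow_apply_nonneg hQ t i j) (fun t => hentry t i j) hlim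

theorem tendsto_sum_range_vecMul_pow [DecidableEq ι] {R : Type*} [Ring R] [TopologicalSpace R]
    [IsTopologicalRing R] {Q : Matrix ι ι R} {v w : ι → R} (hv : v = w + v ᵥ* Q)
    (hQ : Tendsto (fun t => Q ^ t) atTop (𝓝 0)) :
    Tendsto (fun n => ∑ t ∈ range n, w ᵥ* Q ^ t) atTop (𝓝 v) := by
  have hpartial : ∀ n, ∑ t ∈ range n, w ᵥ* Q ^ t = v - v ᵥ* Q ^ n := by
    intro n
    induction n with
    | zero => simp
    | succ n ih =>
      have hw : w = v - v ᵥ* Q := eq_sub_of_add_eq hv.symm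
      rw [sum_range_succ, ih, hw, sub_vecMul, vecMul_vecMul, ← pow_succ']
      abel
  have hrest : Tendsto (fun n => v ᵥ* Q ^ n) atTop (𝓝 0) := by
    simpa [Function.comp_def] using
      ((continuous_const.matrix_vecMul continuous_id).tendsto 0).comp hQ
  simpa [hpartial] using tendsto_const_nhds.sub hrest

end Matrix

namespace Evo

open Matrix

variable {N : ℕ} {p : St N → Event N → ℝ}

instance : DecidablePred (Transient (N := N)) :=
  fun x => inferInstanceAs (Decidable (x ≠ stA N ∧ x ≠ stB N))

theorem not_transient_iff {x : St N} : ¬ Transient x ↔ x = stA N ∨ x = stB N := by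
  simp only [Transient, not_and_or, not_ne_iff]

theorem upd_of_not_transient {x : St N} (hx : ¬ Transient x) (e : Event N) : upd e x = x := by
  rcases not_transient_iff.1 hx with rfl | rfl <;> rfl

theorem foldl_upd (L : List (Event N)) (x : St N) :
    L.foldl (fun s e => upd e s) x = x ∘ (L.map extMap).foldr (· ∘ ·) id := by
  induction L generalizing x with
  | nil => rfl
  | cons e L ih => exact ih (upd e x)

theorem tmat_mem_rowStochastic (hp : IsRule p) : tmat p ∈ rowStochastic ℝ (St N) := by
  refine mem_rowStochastic_iff_sum.2 ⟨fun x y => sum_nonneg fun e _ => ?_, fun x => ?_⟩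
  · split_ifs
    exacts [hp.1 x e, le_rfl]
  · simp only [tmat, of_apply]
    rw [sum_comm]
    simpa using hp.2 x

theorem le_tmat_upd (hp : IsRule p) (x : St N) (e : Event N) : p x e ≤ tmat p x (upd e x) := by
  simpa [tmat] using single_le_sum (f := fun e' => if upd e' x = upd e x then p x e' else 0)
    (fun e' _ => by split_ifs; exacts [hp.1 x e', le_rfl]) (mem_univ e)

theorem tmat_eq_zero_of_not_transient {x y : St N} (hx : ¬ Transient x) (hy : Transient y) :
    tmat p x y = 0 := by
  have hxy : x ≠ y := fun h => hx (h ▸ hy)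
  simp [tmat, upd_of_not_transient hx, hxy]

theorem sum_transient_le_one_sub {M : Matrix (St N) (St N) ℝ} (hM : M ∈ rowStochastic ℝ (St N))
    (x : St N) {y : St N} (hy : ¬ Transient y) :
    ∑ b : {b : St N // Transient b}, M x ↑b ≤ 1 - M x y := by
  have hy_le : M x y ≤ ∑ b : {b : St N // ¬ Transient b}, M x ↑b :=
    single_le_sum (f := fun b : {b : St N // ¬ Transient b} => M x ↑b)
      (fun _ _ => nonneg_of_mem_rowStochastic hM) (mem_univ ⟨y, hy⟩)
  have hsplit := Fintype.sum_subtype_add_sum_subtype Transient (M x)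
  rw [sum_row_of_mem_rowStochastic hM] at hsplit
  linarith

theorem tmat_pow_foldl_pos (hp : IsRule p) (L : List (Event N)) (hL : ∀ e ∈ L, ∀ x, 0 < p x e)
    (x : St N) : 0 < (tmat p ^ L.length) x (L.foldl (fun s e => upd e s) x) := by
  induction L generalizing x with
  | nil => simp
  | cons e L ih =>
    have hP := tmat_mem_rowStochastic hp
    rw [List.length_cons, pow_succ', mul_apply, List.foldl_cons]
    set y := L.foldl (fun s e => upd e s) (upd e x)
    calc 0 < tmat p x (upd e x) * (tmat p ^ L.length) (upd e x) y :=
          mul_pos ((hL e List.mem_cons_self x).trans_le (le_tmat_upd hp x e))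
            (ih (fun e' he' => hL e' (List.mem_cons_of_mem e he')) _)
      _ ≤ ∑ z, tmat p x z * (tmat p ^ L.length) z y :=
          single_le_sum (f := fun z => tmat p x z * (tmat p ^ L.length) z y)
            (fun z _ => mul_nonneg (nonneg_of_mem_rowStochastic hP)
              (nonneg_of_mem_rowStochastic (pow_mem hP _)))
            (mem_univ _)

theorem FixAxiom.exists_pow_pos_not_transient (hp : IsRule p) (hfix : FixAxiom p) :
    ∃ m, ∀ x : St N, ∃ y, ¬ Transient y ∧ 0 < (tmat p ^ m) x y := by
  obtain ⟨i, m, ev, -, hpos, -, hcomp⟩ := hfix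
  refine ⟨m, fun x => ⟨_, ?_, List.length_ofFn (f := ev) ▸
    tmat_pow_foldl_pos hp (List.ofFn ev) (fun e he s => ?_) x⟩⟩
  · have hconst : (List.ofFn ev).foldl (fun s e => upd e s) x = fun _ => x i := by
      rw [foldl_upd, List.map_ofFn]
      exact funext fun j => congrArg x (hcomp j)
    rw [hconst, not_transient_iff]
    cases x i
    exacts [Or.inr rfl, Or.inl rfl]
  · obtain ⟨k, rfl⟩ := List.mem_ofFn.1 he
    exact hpos k s

def transientBlock (p : St N → Event N → ℝ) :
    Matrix {x : St N // Transient x} {x : St N // Transient x} ℝ :=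
  (tmat p).submatrix Subtype.val Subtype.val

theorem transientBlock_pow (t : ℕ) :
    transientBlock p ^ t = (tmat p ^ t).submatrix Subtype.val Subtype.val :=
  submatrix_val_pow_of_compl_closed (P := tmat p)
    (fun _ _ hx hy => tmat_eq_zero_of_not_transient hx hy) t

theorem tendsto_transientBlock_pow (hp : IsRule p) (hfix : FixAxiom p) :
    Tendsto (fun t => transientBlock p ^ t) atTop (𝓝 0) := by
  have hP := tmat_mem_rowStochastic hp
  have hA : ¬ Transient (stA N) := fun h => h.1 rfl
  obtain ⟨m, hm⟩ := hfix.exists_pow_pos_not_transient hp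
  refine tendsto_pow_atTop_nhds_zero_of_sum_pow_apply_lt_one
    (fun _ _ => nonneg_of_mem_rowStochastic hP)
    (fun a => (sum_transient_le_one_sub hP a hA).trans
      (sub_le_self _ (nonneg_of_mem_rowStochastic hP)))
    (m := m) fun a => ?_
  obtain ⟨y, hy, hpos⟩ := hm a
  rw [transientBlock_pow]
  exact (sum_transient_le_one_sub (pow_mem hP m) a hy).trans_lt (sub_lt_self _ hpos)

theorem IsStat.eq_single_add_vecMul_transientBlock {ξ : St N} (hξ : Transient ξ) {u : ℝ}
    {q : St N → ℝ} (hq : IsStat (amend p ξ u) q) :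
    (fun b : {b : St N // Transient b} => q b)
      = Pi.single ⟨ξ, hξ⟩ (u * ∑ z : {z : St N // ¬ Transient z}, q z)
        + (fun a : {a : St N // Transient a} => q a) ᵥ* transientBlock p := by
  funext b
  have hT : ∀ a : {a : St N // Transient a}, amend p ξ u a b = transientBlock p a b :=
    fun a => by simp [amend, transientBlock, ← not_transient_iff, a.2]
  have hnT : ∀ z : {z : St N // ¬ Transient z},
      amend p ξ u z b = if (b : St N) = ξ then u else 0 :=
    fun z => by simp [amend, not_transient_iff.1 z.2, tmat_eq_zero_of_not_transient z.2 b.2]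
  rw [← hq.2.2 b, ← Fintype.sum_subtype_add_sum_subtype Transient]
  simp only [hT, hnT, Pi.add_apply, vecMul, dotProduct, Pi.single_apply, Subtype.ext_iff]
  split_ifs <;> simp [mul_sum, mul_comm, add_comm]

theorem IsStat.exists_eq_mul_sojourn (hp : IsRule p) (hfix : FixAxiom p) {ξ : St N}
    (hξ : Transient ξ) {u : ℝ} (hu : 0 < u) {q : St N → ℝ} (hq : IsStat (amend p ξ u) q) :
    ∃ c ≠ 0, ∀ b : {b : St N // Transient b}, q b = c * sojourn p ξ b := by
  set c := u * ∑ z : {z : St N // ¬ Transient z}, q z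
  have hc0 : 0 ≤ c := mul_nonneg hu.le (sum_nonneg fun z _ => hq.1 z)
  have hpartial := tendsto_sum_range_vecMul_pow (hq.eq_single_add_vecMul_transientBlock hξ)
    (tendsto_transientBlock_pow hp hfix)
  have hq_eq : ∀ b : {b : St N // Transient b}, q b = c * sojourn p ξ b := by
    intro b
    have hb := ((continuous_apply b).tendsto _).comp hpartial
    simp only [Function.comp_def, Finset.sum_apply, single_vecMul, transientBlock_pow,
      Pi.smul_apply, row_apply, submatrix_apply, smul_eq_mul] at hb
    have hnn : ∀ t, 0 ≤ c * (tmat p ^ t) ξ b := fun t =>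
      mul_nonneg hc0 (nonneg_of_mem_rowStochastic (pow_mem (tmat_mem_rowStochastic hp) t))
    rw [sojourn, ← tsum_mul_left]
    exact ((hasSum_iff_tendsto_nat_of_nonneg hnn _).2 hb).tsum_eq.symm
  refine ⟨c, fun hc => ?_, hq_eq⟩
  have hnT : ∑ z : {z : St N // ¬ Transient z}, q z = 0 :=
    (mul_eq_zero.1 hc).resolve_left hu.ne'
  have hT : ∑ b : {b : St N // Transient b}, q b = 0 :=
    sum_eq_zero fun b _ => by rw [hq_eq b, hc, zero_mul]
  have htotal := hq.2.1
  rw [← Fintype.sum_subtype_add_sum_subtype Transient, hT, hnT] at htotal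
  norm_num at htotal

/-- the rare-mutation conditional probability of a transient state `x` equals
the fraction of sojourn time spent in `x` among all transient states:
`lim_{u→0⁺} π_⟲(ξ)(x)/π_⟲(ξ)(𝔹_T^N) = t_ξ(x)/t_ξ(𝔹_T^N)`. -/
theorem statement3 {N : ℕ} (p : St N → Event N → ℝ) (hp : IsRule p)
    (hfix : FixAxiom p) (ξ : St N) (hξ : Transient ξ)
    (statDist : ℝ → St N → ℝ)
    (hstat : ∀ u ∈ Set.Ioc (0 : ℝ) 1, IsStat (amend p ξ u) (statDist u))
    (x : St N) (hx : Transient x) :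
    Tendsto
      (fun u =>
        statDist u x /
          ∑ y ∈ Finset.univ.filter (fun y : St N => y ≠ stA N ∧ y ≠ stB N), statDist u y)
      (𝓝[>] (0 : ℝ))
      (𝓝 (sojourn p ξ x /
        ∑ y ∈ Finset.univ.filter (fun y : St N => y ≠ stA N ∧ y ≠ stB N), sojourn p ξ y)) := by
  have hfilter : ∀ f : St N → ℝ,
      ∑ y ∈ univ.filter (fun y : St N => y ≠ stA N ∧ y ≠ stB N), f y
        = ∑ b : {b : St N // Transient b}, f b :=
    fun f => sum_subtype _ (by simp [Transient]) f
  have hconst : ∀ u ∈ Set.Ioc (0 : ℝ) 1,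
      sojourn p ξ x / ∑ y ∈ univ.filter (fun y : St N => y ≠ stA N ∧ y ≠ stB N), sojourn p ξ y
        = statDist u x /
          ∑ y ∈ univ.filter (fun y : St N => y ≠ stA N ∧ y ≠ stB N), statDist u y := by
    intro u hu
    obtain ⟨c, hc, hq⟩ := (hstat u hu).exists_eq_mul_sojourn hp hfix hξ hu.1
    rw [hfilter, hfilter, hq ⟨x, hx⟩, sum_congr rfl fun b _ => hq b, ← mul_sum,
      mul_div_mul_left _ _ hc]
  exact tendsto_const_nhds.congr' (eventuallyEq_of_mem (Ioc_mem_nhdsGT zero_lt_one) hconst)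

end Evo
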